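/- Let φ : ℝ → ℝ be a measurable odd function (φ(−u) = −φ(u) for all u). Then ∫_{ℝ^m×ℝ^m} φ(Δ(x)) e^{−H(x)} dx = −∫_{ℝ^m×ℝ^m} φ(Δ(x)) e^{−H(ψ(x))} dx, provided at least one of the two integrands is integrable (in which case both are). -/

import Mathlib

/-!
Put `T = S ∘ ψ`. Reversibility makes `T` an involution, and `T` preserves volume because both
`S` and `ψ` do. Since `H ∘ S = H`, one gets `H (T x) = H (ψ x)` and `H (ψ (T x)) = H x`, so `T`
swaps the two energies and flips the sign of `Δ`. For odd `φ` the change of variables `x ↦ T x`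
therefore turns the integrand `φ(Δ) e^{-H}` into `-φ(Δ) e^{-H ∘ ψ}`.
-/

open MeasureTheory Function

section ChangeOfVariables

variable {α E : Type*} [MeasurableSpace α] {μ : Measure α} [NormedAddCommGroup E]
  {T : α ≃ᵐ α} {f g : α → E}

theorem MeasureTheory.MeasurePreserving.integrable_iff_of_comp_eq_neg
    (hT : MeasurePreserving T μ μ) (hfg : ∀ x, f (T x) = -g x) :
    Integrable f μ ↔ Integrable g μ := by
  rw [← hT.integrable_comp_emb T.measurableEmbedding, ← integrable_neg_iff (f := g)]
  exact integrable_congr (.of_forall hfg)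

theorem MeasureTheory.MeasurePreserving.integral_eq_neg_of_comp_eq_neg [NormedSpace ℝ E]
    (hT : MeasurePreserving T μ μ) (hfg : ∀ x, f (T x) = -g x) :
    ∫ x, f x ∂μ = -∫ x, g x ∂μ := by
  rw [← hT.integral_comp' f, ← integral_neg]
  exact integral_congr_ae (.of_forall hfg)

end ChangeOfVariables

theorem measurePreserving_neg_snd {E : Type*} [MeasureSpace E] [InvolutiveNeg E]
    [MeasurableNeg E] [(volume : Measure E).IsNegInvariant] [SFinite (volume : Measure E)] :
    MeasurePreserving (fun x : E × E => (x.1, -x.2)) volume volume :=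
  (MeasurePreserving.id volume).prod (Measure.measurePreserving_neg (volume : Measure E))

section Reversible

variable {α : Type*} {S : α → α} {ψ : α ≃ α}

theorem apply_apply_of_reversible (hS : Involutive S) (hrev : ∀ x, S (ψ.symm (S x)) = ψ x)
    (x : α) : ψ (S (ψ x)) = S x := by
  rw [← hrev (S (ψ x)), hS, Equiv.symm_apply_apply]

theorem involutive_comp_of_reversible (hS : Involutive S)
    (hrev : ∀ x, S (ψ.symm (S x)) = ψ x) : Involutive (S ∘ ψ) := fun x => by
  rw [comp_apply, comp_apply, apply_apply_of_reversible hS hrev, hS]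

theorem sub_eq_neg_sub_of_reversible (hS : Involutive S) (hrev : ∀ x, S (ψ.symm (S x)) = ψ x)
    {H : α → ℝ} (hHS : ∀ x, H (S x) = H x) (x : α) :
    H (ψ (S (ψ x))) - H (S (ψ x)) = -(H (ψ x) - H x) := by
  rw [apply_apply_of_reversible hS hrev, hHS, hHS, neg_sub]

end Reversible

theorem stmt_0 (m : ℕ)
    (H : ((Fin m → ℝ) × (Fin m → ℝ)) → ℝ)
    (hHS : ∀ x : (Fin m → ℝ) × (Fin m → ℝ), H (x.1, -x.2) = H x)
    (ψ : ((Fin m → ℝ) × (Fin m → ℝ)) ≃ ((Fin m → ℝ) × (Fin m → ℝ)))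
    (hψvol : MeasurePreserving ψ volume volume)
    (hψrev : ∀ x : (Fin m → ℝ) × (Fin m → ℝ),
      ((ψ.symm (x.1, -x.2)).1, -(ψ.symm (x.1, -x.2)).2) = ψ x)
    (φ : ℝ → ℝ) (hφodd : ∀ u : ℝ, φ (-u) = -φ u)
    (hint : Integrable (fun x => φ (H (ψ x) - H x) * Real.exp (-H x)) ∨
      Integrable (fun x => φ (H (ψ x) - H x) * Real.exp (-H (ψ x)))) :
    Integrable (fun x => φ (H (ψ x) - H x) * Real.exp (-H x)) ∧
    Integrable (fun x => φ (H (ψ x) - H x) * Real.exp (-H (ψ x))) ∧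
    ∫ x, φ (H (ψ x) - H x) * Real.exp (-H x) =
      - ∫ x, φ (H (ψ x) - H x) * Real.exp (-H (ψ x)) := by
  set S : (Fin m → ℝ) × (Fin m → ℝ) → (Fin m → ℝ) × (Fin m → ℝ) :=
    fun x => (x.1, -x.2)
  have hS : Involutive S := fun x => by simp [S]
  have hHS : ∀ x, H (S x) = H x := hHS
  have hSvol : MeasurePreserving S volume volume := measurePreserving_neg_snd
  let T := MeasurableEquiv.ofInvolutive (S ∘ ψ) (involutive_comp_of_reversible hS hψrev)
    (hSvol.measurable.comp hψvol.measurable)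
  have hTvol : MeasurePreserving T volume volume := hSvol.comp hψvol
  set f := fun x => φ (H (ψ x) - H x) * Real.exp (-H x)
  set g := fun x => φ (H (ψ x) - H x) * Real.exp (-H (ψ x))
  have hfg : ∀ x, f (T x) = -g x := fun x => by
    change φ (H (ψ (S (ψ x))) - H (S (ψ x))) * Real.exp (-H (S (ψ x))) = _
    rw [sub_eq_neg_sub_of_reversible hS hψrev hHS, hφodd, neg_mul, hHS]
  have hiff := hTvol.integrable_iff_of_comp_eq_neg hfg
  exact ⟨hint.elim id hiff.mpr, hint.elim hiff.mp id, hTvol.integral_eq_neg_of_comp_eq_neg hfg⟩
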